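/- Let M be a convex multiplicative system of means and let p ∈ [1,∞] be such that M((s,1−s),(1,0)) = s^{1/p} for all s ∈ (0,1) (with 1/∞ = 0). Then for every n ≥ 1, the function x ↦ n^{1/p} · M(u_n, (|x_1|,…,|x_n|)) is a norm on ℝ^n, where u_n = (1/n,…,1/n) ∈ Δ_n. -/

import Mathlib

/-!
Multiplying by a one-point system shows that `M(w, c • x) = c * M(w, x)`. Iterated convexity
gives `M(w, (k x + l y) / 2^m) ≤ max (M(w, x)) (M(w, y))` whenever `k + l = 2^m`; writing
`(x + y) / T`, with `T = M(w, x) + M(w, y) + ε`, as such a dyadic combination of rescalings of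
`x` and `y` with mean at most `1` yields subadditivity, hence the triangle inequality.
For definiteness, functoriality collapses the mean of the indicator of `j` to
`M((w j, 1 - w j), (1, 0))`, which is positive by the normalisation `s ^ (1/p)`, and
`|x j|` times it is bounded by `M(w, |x|)` by monotonicity.
-/

open scoped NNReal ENNReal BigOperators

/-- The power mean `M_p` of order `p ∈ [0,∞]` with weights `w` and arguments `x`. -/
noncomputable def powerMean (p : ℝ≥0∞) {n : ℕ} (w x : Fin n → ℝ≥0) : ℝ≥0 :=
  if p = ∞ then (Finset.univ.filter (fun i => 0 < w i)).sup x
  else if p = 0 then ∏ i, x i ^ ((w i : ℝ))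
  else (∑ i, w i * x i ^ p.toReal) ^ (1 / p.toReal)

/-- A system of means: for each `n`, a function `M n : Δ_n × ℝ≥0ⁿ → ℝ≥0`
(defined on all of `ℝ≥0ⁿ × ℝ≥0ⁿ`, with the axioms demanded only when `∑ w = 1`),
satisfying functoriality, consistency and monotonicity. -/
structure MeanSystem where
  M : ∀ n : ℕ, (Fin n → ℝ≥0) → (Fin n → ℝ≥0) → ℝ≥0
  functorial : ∀ {m n : ℕ} (f : Fin m → Fin n) (w : Fin m → ℝ≥0),
    (∑ i, w i) = 1 → ∀ x : Fin n → ℝ≥0,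
      M n (fun j => ∑ i ∈ Finset.univ.filter (fun i => f i = j), w i) x = M m w (x ∘ f)
  consistent : ∀ c : ℝ≥0, M 1 (fun _ => 1) (fun _ => c) = c
  mono : ∀ {n : ℕ} (w x y : Fin n → ℝ≥0), (∑ i, w i) = 1 →
    (∀ i, x i ≤ y i) → M n w x ≤ M n w y

/-- Multiplicativity of a system of means, with respect to the fixed bijection
`finProdFinEquiv : Fin m × Fin n ≃ Fin (m * n)`. -/
def MeanSystem.IsMultiplicative (S : MeanSystem) : Prop :=
  ∀ {m n : ℕ} (w x : Fin m → ℝ≥0) (v y : Fin n → ℝ≥0),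
    (∑ i, w i) = 1 → (∑ j, v j) = 1 →
    S.M (m * n) (fun k => w (finProdFinEquiv.symm k).1 * v (finProdFinEquiv.symm k).2)
        (fun k => x (finProdFinEquiv.symm k).1 * y (finProdFinEquiv.symm k).2)
      = S.M m w x * S.M n v y

/-- Convexity of a system of means. -/
def MeanSystem.IsConvex (S : MeanSystem) : Prop :=
  ∀ {n : ℕ} (w x y : Fin n → ℝ≥0), (∑ i, w i) = 1 →
    S.M n w (fun i => (x i + y i) / 2) ≤ max (S.M n w x) (S.M n w y)

theorem NNReal.exists_dyadic_split {a b T : ℝ≥0} (h : a + b < T) :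
    ∃ m k l : ℕ, k + l = 2 ^ m ∧ a * 2 ^ m < k * T ∧ b * 2 ^ m < l * T := by
  have hT : (0 : ℝ) < T := by exact_mod_cast zero_le.trans_lt h
  have hgap : (0 : ℝ) < T - a - b := by
    have : (a : ℝ) + b < T := by exact_mod_cast h
    linarith
  obtain ⟨m, hm⟩ := pow_unbounded_of_one_lt ((T : ℝ) / (T - a - b)) one_lt_two
  rw [div_lt_iff₀ hgap] at hm
  set k := ⌊(a : ℝ) * 2 ^ m / T⌋₊ + 1
  have hk_gt : (a : ℝ) * 2 ^ m < k * T := by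
    rw [← div_lt_iff₀ hT]; push_cast [k]; exact Nat.lt_floor_add_one _
  have hk_le : (k : ℝ) * T ≤ a * 2 ^ m + T := by
    have : (⌊(a : ℝ) * 2 ^ m / T⌋₊ : ℝ) * T ≤ a * 2 ^ m :=
      (le_div_iff₀ hT).1 (Nat.floor_le (by positivity))
    push_cast [k]; linarith
  have hb : (0 : ℝ) ≤ b := b.coe_nonneg
  have hk2m : k ≤ 2 ^ m := by
    have : (k : ℝ) < 2 ^ m := by nlinarith
    exact_mod_cast this.le
  have hl_gt : (b : ℝ) * 2 ^ m < ((2 ^ m - k : ℕ) : ℝ) * T := by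
    push_cast [Nat.cast_sub hk2m]; nlinarith
  exact ⟨m, k, 2 ^ m - k, by omega, by exact_mod_cast hk_gt, by exact_mod_cast hl_gt⟩

namespace MeanSystem

variable (S : MeanSystem)

theorem M_comp_equiv {m n : ℕ} (e : Fin m ≃ Fin n) {w : Fin m → ℝ≥0} (hw : ∑ i, w i = 1)
    (x : Fin n → ℝ≥0) : S.M n (w ∘ e.symm) x = S.M m w (x ∘ e) := by
  rw [← S.functorial e w hw x]
  congr 1
  ext j
  rw [Finset.sum_eq_single_of_mem (e.symm j) (by simp)
    fun i _ hi => by simp_all [← Equiv.eq_symm_apply]]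
  simp

theorem M_const_mul (hmul : S.IsMultiplicative) {n : ℕ} {w : Fin n → ℝ≥0} (hw : ∑ i, w i = 1)
    (c : ℝ≥0) (x : Fin n → ℝ≥0) : S.M n w (fun i => c * x i) = c * S.M n w x := by
  let e : Fin n ≃ Fin (n * 1) := (Equiv.prodUnique (Fin n) (Fin 1)).symm.trans finProdFinEquiv
  have h := hmul w x (fun _ : Fin 1 => 1) (fun _ => c) hw (by simp)
  rw [S.consistent] at h
  rw [mul_comm c, ← h]
  convert (S.M_comp_equiv e hw (fun k => x (finProdFinEquiv.symm k).1 * c)).symm using 2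
  · funext i
    simp only [Function.comp_apply, e, Equiv.trans_apply, Equiv.symm_apply_apply]
    simp [mul_comm]
  · ext k; simp [e]

theorem M_dyadic_le_max (hconv : S.IsConvex) {n : ℕ} {w : Fin n → ℝ≥0} (hw : ∑ i, w i = 1)
    (x y : Fin n → ℝ≥0) {m k l : ℕ} (hkl : k + l = 2 ^ m) :
    S.M n w (fun i => (k * x i + l * y i) / 2 ^ m) ≤ max (S.M n w x) (S.M n w y) := by
  induction m generalizing k l with
  | zero =>
    obtain ⟨rfl, rfl⟩ | ⟨rfl, rfl⟩ : (k = 0 ∧ l = 1) ∨ (k = 1 ∧ l = 0) := by omega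
    all_goals simp
  | succ m ih =>
    obtain ⟨k₁, k₂, l₁, l₂, rfl, rfl, h₁, h₂⟩ :
        ∃ k₁ k₂ l₁ l₂, k = k₁ + k₂ ∧ l = l₁ + l₂ ∧ k₁ + l₁ = 2 ^ m ∧ k₂ + l₂ = 2 ^ m :=
      ⟨k / 2, k - k / 2, 2 ^ m - k / 2, l - (2 ^ m - k / 2), by omega, by omega, by omega, by omega⟩
    have hsplit : (fun i => ((↑(k₁ + k₂) : ℝ≥0) * x i + ↑(l₁ + l₂) * y i) / 2 ^ (m + 1)) =
        fun i => ((k₁ * x i + l₁ * y i) / 2 ^ m + (k₂ * x i + l₂ * y i) / 2 ^ m) / 2 := by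
      funext i; push_cast; ring
    rw [hsplit]
    exact (hconv w _ _ hw).trans (max_le (ih h₁) (ih h₂))

theorem M_add_le (hconv : S.IsConvex) (hmul : S.IsMultiplicative) {n : ℕ} {w : Fin n → ℝ≥0}
    (hw : ∑ i, w i = 1) (x y : Fin n → ℝ≥0) :
    S.M n w (fun i => x i + y i) ≤ S.M n w x + S.M n w y := by
  refine le_of_forall_pos_le_add fun ε hε => ?_
  set T := S.M n w x + S.M n w y + ε
  have hT : 0 < T := by positivity
  obtain ⟨m, k, l, hkl, hk, hl⟩ := NNReal.exists_dyadic_split (lt_add_of_pos_right _ hε)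
  have hkT : 0 < (k : ℝ≥0) * T := zero_le.trans_lt hk
  have hlT : 0 < (l : ℝ≥0) * T := zero_le.trans_lt hl
  have hk0 : (k : ℝ≥0) ≠ 0 := left_ne_zero_of_mul hkT.ne'
  have hl0 : (l : ℝ≥0) ≠ 0 := left_ne_zero_of_mul hlT.ne'
  set x' := fun i => 2 ^ m / (k * T) * x i
  set y' := fun i => 2 ^ m / (l * T) * y i
  have hx' : S.M n w x' ≤ 1 := by
    rw [S.M_const_mul hmul hw, div_mul_eq_mul_div, div_le_one hkT, mul_comm]; exact hk.le
  have hy' : S.M n w y' ≤ 1 := by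
    rw [S.M_const_mul hmul hw, div_mul_eq_mul_div, div_le_one hlT, mul_comm]; exact hl.le
  have hcombo : (fun i => x i + y i) = fun i => T * ((k * x' i + l * y' i) / 2 ^ m) := by
    funext i; simp only [x', y']; field_simp
  calc S.M n w (fun i => x i + y i)
      = T * S.M n w (fun i => (k * x' i + l * y' i) / 2 ^ m) := by
        rw [hcombo, S.M_const_mul hmul hw]
    _ ≤ T * 1 := by
        gcongr; exact (S.M_dyadic_le_max hconv hw x' y' hkl).trans (max_le hx' hy')
    _ = _ := mul_one T

theorem M_single_one {n : ℕ} {w : Fin n → ℝ≥0} (hw : ∑ i, w i = 1) (j : Fin n) :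
    S.M n w (Pi.single j 1) = S.M 2 ![w j, 1 - w j] ![1, 0] := by
  let f : Fin n → Fin 2 := fun i => if i = j then 0 else 1
  have hsingle : ![(1 : ℝ≥0), 0] ∘ f = Pi.single j 1 := by
    ext i; by_cases h : i = j <;> simp [f, h]
  rw [← hsingle, ← S.functorial f w hw]
  congr 1
  refine funext (Fin.forall_fin_two.2 ⟨?_, ?_⟩)
  · simp [f, Finset.filter_eq']
  · have hfilter : Finset.univ.filter (fun i => f i = 1) = Finset.univ.erase j := by
      ext i; by_cases h : i = j <;> simp [f, h]
    rw [hfilter, ← hw, ← Finset.add_sum_erase _ _ (Finset.mem_univ j), add_tsub_cancel_left]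
    rfl

theorem M_weight_single_one {n : ℕ} (j : Fin n) (x : Fin n → ℝ≥0) :
    S.M n (Pi.single j 1) x = x j := by
  have h := S.functorial (fun _ : Fin 1 => j) (fun _ => 1) (by simp) x
  rw [Function.comp_def, S.consistent] at h
  rw [← h]
  congr 1
  funext k
  by_cases hk : j = k <;> simp [eq_comm, hk]

theorem M_single_one_pos (hθ : ∀ s : ℝ≥0, 0 < s → s < 1 → 0 < S.M 2 ![s, 1 - s] ![1, 0])
    {n : ℕ} {w : Fin n → ℝ≥0} (hw : ∑ i, w i = 1) (j : Fin n) (hj : 0 < w j) :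
    0 < S.M n w (Pi.single j 1) := by
  have hsum := Finset.add_sum_erase Finset.univ w (Finset.mem_univ j)
  rw [hw] at hsum
  rcases (le_of_le_of_eq le_self_add hsum : w j ≤ 1).lt_or_eq with hlt | heq
  · rw [S.M_single_one hw]; exact hθ _ hj hlt
  · have hrest : ∑ i ∈ Finset.univ.erase j, w i = 0 := by
      rwa [heq, add_eq_left] at hsum
    have hdirac : w = Pi.single j 1 := by
      funext i
      by_cases hi : i = j
      · subst hi; simp [heq]
      · simp [hi, (Finset.sum_eq_zero_iff.1 hrest) i (by simp [hi])]
    rw [hdirac, S.M_weight_single_one]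
    simp

theorem apply_eq_zero_of_M_eq_zero (hmul : S.IsMultiplicative) {n : ℕ} {w : Fin n → ℝ≥0}
    (hw : ∑ i, w i = 1) {x : Fin n → ℝ≥0} (hx : S.M n w x = 0) {j : Fin n}
    (hj : 0 < S.M n w (Pi.single j 1)) : x j = 0 := by
  have hle : x j * S.M n w (Pi.single j 1) ≤ S.M n w x := by
    rw [← S.M_const_mul hmul hw]
    refine S.mono _ _ _ hw fun i => ?_
    by_cases hi : i = j
    · subst hi; simp
    · simp [hi]
  rw [hx, nonpos_iff_eq_zero, mul_eq_zero] at hle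
  exact hle.resolve_right hj.ne'

end MeanSystem

theorem meanSystem_norm_general (S : MeanSystem)
    (hconv : S.IsConvex) (hmul : S.IsMultiplicative)
    (p : ℝ≥0∞)
    (hθ : ∀ s : ℝ≥0, 0 < s → s < 1 → S.M 2 ![s, 1 - s] ![1, 0] = s ^ p.toReal⁻¹)
    (n : ℕ) (hn : 1 ≤ n) :
    (∀ x y : Fin n → ℝ,
        (n : ℝ≥0) ^ p.toReal⁻¹ * S.M n (fun _ => (n : ℝ≥0)⁻¹) (fun i => ‖x i + y i‖₊)
          ≤ (n : ℝ≥0) ^ p.toReal⁻¹ * S.M n (fun _ => (n : ℝ≥0)⁻¹) (fun i => ‖x i‖₊)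
            + (n : ℝ≥0) ^ p.toReal⁻¹ * S.M n (fun _ => (n : ℝ≥0)⁻¹) (fun i => ‖y i‖₊)) ∧
    (∀ (c : ℝ) (x : Fin n → ℝ),
        (n : ℝ≥0) ^ p.toReal⁻¹ * S.M n (fun _ => (n : ℝ≥0)⁻¹) (fun i => ‖c * x i‖₊)
          = ‖c‖₊ * ((n : ℝ≥0) ^ p.toReal⁻¹
              * S.M n (fun _ => (n : ℝ≥0)⁻¹) (fun i => ‖x i‖₊))) ∧
    (∀ x : Fin n → ℝ,
        (n : ℝ≥0) ^ p.toReal⁻¹ * S.M n (fun _ => (n : ℝ≥0)⁻¹) (fun i => ‖x i‖₊) = 0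
          → x = 0) := by
  have hw : ∑ _i : Fin n, (n : ℝ≥0)⁻¹ = 1 := by
    simp [Finset.card_univ, mul_inv_cancel₀ (by positivity : (n : ℝ≥0) ≠ 0)]
  refine ⟨fun x y => ?_, fun c x => ?_, fun x hx => ?_⟩
  · rw [← mul_add]
    gcongr
    exact (S.mono _ _ _ hw fun i => nnnorm_add_le _ _).trans (S.M_add_le hconv hmul hw _ _)
  · simp_rw [nnnorm_mul]
    rw [S.M_const_mul hmul hw]
    ring
  · have hθpos : ∀ s : ℝ≥0, 0 < s → s < 1 → 0 < S.M 2 ![s, 1 - s] ![1, 0] :=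
      fun s hs0 hs1 => (hθ s hs0 hs1).symm ▸ NNReal.rpow_pos hs0
    have hM : S.M n (fun _ => (n : ℝ≥0)⁻¹) (fun i => ‖x i‖₊) = 0 :=
      (mul_eq_zero.1 hx).resolve_left (NNReal.rpow_pos (by positivity)).ne'
    funext j
    simpa using S.apply_eq_zero_of_M_eq_zero hmul hw hM
      (S.M_single_one_pos hθpos hw j (by positivity))

/-- Let `M` be a convex multiplicative system of means and `p ∈ [1,∞]` with
`M((s,1−s),(1,0)) = s^{1/p}` for all `s ∈ (0,1)` (with `1/∞ = 0`).  Then for each `n ≥ 1`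
the function `x ↦ n^{1/p} · M(u_n, (|x_1|,…,|x_n|))` is a norm on `ℝⁿ`: it satisfies the
triangle inequality, absolute homogeneity, and vanishes only at `0`. -/
theorem meanSystem_norm (S : MeanSystem)
    (hconv : S.IsConvex) (hmul : S.IsMultiplicative)
    (p : ℝ≥0∞) (hp : 1 ≤ p)
    (hθ : ∀ s : ℝ≥0, 0 < s → s < 1 → S.M 2 ![s, 1 - s] ![1, 0] = s ^ p.toReal⁻¹)
    (n : ℕ) (hn : 1 ≤ n) :
    (∀ x y : Fin n → ℝ,
        (n : ℝ≥0) ^ p.toReal⁻¹ * S.M n (fun _ => (n : ℝ≥0)⁻¹) (fun i => ‖x i + y i‖₊)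
          ≤ (n : ℝ≥0) ^ p.toReal⁻¹ * S.M n (fun _ => (n : ℝ≥0)⁻¹) (fun i => ‖x i‖₊)
            + (n : ℝ≥0) ^ p.toReal⁻¹ * S.M n (fun _ => (n : ℝ≥0)⁻¹) (fun i => ‖y i‖₊)) ∧
    (∀ (c : ℝ) (x : Fin n → ℝ),
        (n : ℝ≥0) ^ p.toReal⁻¹ * S.M n (fun _ => (n : ℝ≥0)⁻¹) (fun i => ‖c * x i‖₊)
          = ‖c‖₊ * ((n : ℝ≥0) ^ p.toReal⁻¹
              * S.M n (fun _ => (n : ℝ≥0)⁻¹) (fun i => ‖x i‖₊))) ∧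
    (∀ x : Fin n → ℝ,
        (n : ℝ≥0) ^ p.toReal⁻¹ * S.M n (fun _ => (n : ℝ≥0)⁻¹) (fun i => ‖x i‖₊) = 0
          → x = 0) :=
  meanSystem_norm_general S hconv hmul p hθ n hn
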